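/- arXiv:2604.23433 — 5 statements merged into one kernel-verified Lean document; each statement's English description precedes it below -/
import Mathlib

section
/- Let 1 ≤ α ≤ θ < ω₁ and let X ⊆ ω^θ + 1 be a subset that is order-isomorphic via a homeomorphism (with respect to the subspace and order topologies) to ω^α + 1. Then the order type of the set CB(X) = {CB(x) : x ∈ X} is at least α + 1. -/
open Ordinal Set

/-- Cantor–Bendixson rank of an ordinal: the exponent of the last term of its
Cantor normal form, with `CB 0 = 0`. -/
noncomputable def CB (o : Ordinal) : Ordinal :=
  ((Ordinal.CNF Ordinal.omega0 o).getLast?.map Prod.fst).getD 0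

/-- `X` is a closed copy of the ordinal `β`: there is an order isomorphism onto
`Iio β` (with the topology induced from the order topology on `Ordinal`) which
is a homeomorphism. -/
def IsClosedCopy (X : Set Ordinal) (β : Ordinal) : Prop :=
  ∃ f : X ≃o (Set.Iio β), Continuous f ∧ Continuous f.symm

/-- `X` is homogeneous of color `i` for the pair coloring `c`. -/
def Homog (c : Ordinal → Ordinal → Fin 2) (X : Set Ordinal) (i : Fin 2) : Prop :=
  ∀ x ∈ X, ∀ y ∈ X, x < y → c x y = i

/-- The closed partition relation `γ →_cl (α,β)²`. -/
def ClPartition (γ α β : Ordinal) : Prop :=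
  ∀ c : Ordinal → Ordinal → Fin 2,
    (∃ X ⊆ Set.Iio γ, IsClosedCopy X α ∧ Homog c X 0) ∨
    (∃ X ⊆ Set.Iio γ, IsClosedCopy X β ∧ Homog c X 1)

/-- `X` is an order-isomorphic copy of the ordinal `β`. -/
def IsOrderCopy (X : Set Ordinal) (β : Ordinal) : Prop :=
  Nonempty (X ≃o Set.Iio β)

/-- The classical partition relation `γ → (α,β)²`. -/
def ClassPartition (γ α β : Ordinal) : Prop :=
  ∀ c : Ordinal → Ordinal → Fin 2,
    (∃ X ⊆ Set.Iio γ, IsOrderCopy X α ∧ Homog c X 0) ∨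
    (∃ X ⊆ Set.Iio γ, IsOrderCopy X β ∧ Homog c X 1)

/-- The ordinal Ramsey number `R(α,β)`: least `γ` with `γ → (α,β)²`. -/
noncomputable def Rord (α β : Ordinal) : Ordinal := sInf {γ | ClassPartition γ α β}

/-- The closed Ramsey number `R^cl(α,β)`: least `γ` with `γ →_cl (α,β)²`. -/
noncomputable def Rcl (α β : Ordinal) : Ordinal := sInf {γ | ClPartition γ α β}

/-- The first uncountable ordinal. -/
noncomputable def omega1 : Ordinal := (Cardinal.aleph 1).ord

/-!
A closed copy of `ω ^ α + 1` is the image `g '' [0, ω ^ α]` of a function `g` that is normal on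
`[0, ω ^ α]`: continuity of the inverse of the copy is continuity of `g` at limits. Every nonzero
ordinal `t` has a left neighbourhood `(γ, t)` on which `CB < CB t`; this is read off from the last
term of the Cantor normal form. Take `t = g (ω ^ α)`. By continuity some `g ζ` with `ζ < ω ^ α`
lies in `(γ, t)`, and for every `β < α` the restriction of `g` to `[ζ, ζ + ω ^ β]` is again
a normal copy with values in `(γ, t)`. By induction on `α` the `CB`-values in `(γ, t)` therefore
have order type at least `α`, and `CB t` lies above all of them.
-/

open Ordinal Order Set

universe u v

lemma CB_le_log {x : Ordinal} (hx : x ≠ 0) : CB x ≤ log ω x := by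
  have hne : CNF ω x ≠ [] := by simp [CNF.ne_zero hx]
  rw [CB, List.getLast?_eq_some_getLast hne]
  exact CNF.fst_le_log (List.getLast_mem hne)

lemma CB_of_mod_ne_zero {o : Ordinal} (ho : o ≠ 0) (hr : o % ω ^ log ω o ≠ 0) :
    CB o = CB (o % ω ^ log ω o) := by
  have hne : CNF ω (o % ω ^ log ω o) ≠ [] := by simp [CNF.ne_zero hr]
  obtain ⟨p, l, hl⟩ := List.exists_cons_of_ne_nil hne
  rw [CB, CNF.ne_zero ho, hl, List.getLast?_cons_cons, ← hl, CB]

lemma CB_opow_mul {l c : Ordinal} (hc : c ≠ 0) (hcω : c < ω) : CB (ω ^ l * c) = l := by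
  have hlog : log ω (ω ^ l * c) = l := by
    rw [log_opow_mul one_lt_omega0 l hc, log_eq_zero hcω, add_zero]
  have hmod : ω ^ l * c % ω ^ l = 0 := by simp
  rw [CB, CNF.ne_zero (mul_ne_zero (opow_ne_zero l omega0_ne_zero) hc), hlog, hmod, CNF.zero_right]
  simp

lemma CB_opow (l : Ordinal) : CB (ω ^ l) = l := by
  simpa using CB_opow_mul (l := l) one_ne_zero one_lt_omega0

lemma CB_opow_mul_add {l m x : Ordinal} (hm : m < ω) (hx : x ≠ 0) (hxl : x ≤ ω ^ l) :
    CB (ω ^ l * m + x) = CB x := by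
  rcases hxl.eq_or_lt with rfl | hxl
  · rw [← mul_add_one, CB_opow_mul (add_pos_of_right one_pos m).ne'
      (isSuccLimit_omega0.add_one_lt hm), CB_opow]
  rcases eq_or_ne m 0 with rfl | hm0
  · rw [mul_zero, zero_add]
  have ho : ω ^ l * m + x ≠ 0 := by simp [hx]
  have hlog : log ω (ω ^ l * m + x) = l := by
    rw [log_opow_mul_add one_lt_omega0 hm0 hxl, log_eq_zero hm, add_zero]
  have hmod : (ω ^ l * m + x) % ω ^ log ω (ω ^ l * m + x) = x := by
    rw [hlog, mul_add_mod_self, mod_eq_of_lt hxl]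
  rw [CB_of_mod_ne_zero ho (by rwa [hmod]), hmod]

lemma exists_forall_Ioo_CB_lt_opow (l : Ordinal) :
    ∃ γ < ω ^ l, ∀ x ∈ Ioo γ (ω ^ l), CB x < CB (ω ^ l) := by
  refine ⟨0, opow_pos l omega0_pos, fun x hx => ?_⟩
  rw [CB_opow]
  exact (CB_le_log hx.1.ne').trans_lt ((lt_opow_iff_log_lt one_lt_omega0 hx.1.ne').1 hx.2)

lemma exists_forall_Ioo_CB_lt_opow_mul_add {l m s : Ordinal} (hm : m < ω) (hs : s ≠ 0)
    (hsl : s ≤ ω ^ l) (h : ∃ γ < s, ∀ x ∈ Ioo γ s, CB x < CB s) :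
    ∃ γ < ω ^ l * m + s, ∀ x ∈ Ioo γ (ω ^ l * m + s), CB x < CB (ω ^ l * m + s) := by
  obtain ⟨γ, hγ, hCB⟩ := h
  refine ⟨ω ^ l * m + γ, add_lt_add_right hγ _, ?_⟩
  rintro x ⟨hγx, hxo⟩
  obtain ⟨δ, rfl⟩ := exists_add_of_le (le_self_add.trans hγx.le)
  have hδ : δ ∈ Ioo γ s := ⟨(add_lt_add_iff_left _).1 hγx, (add_lt_add_iff_left _).1 hxo⟩
  rw [CB_opow_mul_add hm (pos_of_gt hδ.1).ne' (hδ.2.le.trans hsl), CB_opow_mul_add hm hs hsl]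
  exact hCB δ hδ

theorem exists_forall_Ioo_CB_lt {o : Ordinal} (ho : o ≠ 0) :
    ∃ γ < o, ∀ x ∈ Ioo γ o, CB x < CB o := by
  induction o using WellFoundedLT.induction with
  | _ o IH =>
  have hdecomp := div_add_mod o (ω ^ log ω o)
  have hcω : o / ω ^ log ω o < ω := div_opow_log_lt o one_lt_omega0
  rcases eq_or_ne (o % ω ^ log ω o) 0 with hr | hr
  · obtain ⟨_ | k, hm⟩ := lt_omega0.1 hcω
    · exact absurd hm (div_opow_log_pos ω ho).ne'
    rw [hr, add_zero, hm, Nat.cast_add_one, mul_add_one] at hdecomp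
    rw [← hdecomp]
    exact exists_forall_Ioo_CB_lt_opow_mul_add (natCast_lt_omega0 k) (opow_ne_zero _ omega0_ne_zero)
      le_rfl (exists_forall_Ioo_CB_lt_opow _)
  · rw [← hdecomp]
    exact exists_forall_Ioo_CB_lt_opow_mul_add hcω hr (mod_lt o (opow_ne_zero _ omega0_ne_zero)).le
      (IH _ (mod_opow_log_lt_self ω ho) hr)

lemma type_lt_of_forall_lt {α : Type*} [LinearOrder α] [WellFoundedLT α] {S T : Set α}
    (hTS : T ⊆ S) {e : α} (he : e ∈ S) (hT : ∀ x ∈ T, x < e) : typeLT T < typeLT S := by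
  let toIio : T ↪o Iio (⟨e, he⟩ : S) :=
    OrderEmbedding.ofStrictMono (fun x => ⟨⟨x, hTS x.2⟩, hT x x.2⟩) fun _ _ h => h
  calc typeLT T ≤ typeLT (Iio (⟨e, he⟩ : S)) := type_le_iff'.2 ⟨toIio.ltEmbedding⟩
    _ < typeLT S := typein_lt_type _ _

structure IsNormalOn (g : Ordinal → Ordinal) (a : Ordinal) : Prop where
  strictMonoOn : StrictMonoOn g (Iic a)
  exists_lt_apply : ∀ ξ ≤ a, IsSuccLimit ξ → ∀ γ < g ξ, ∃ η < ξ, γ < g η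

lemma IsNormalOn.comp_add {g : Ordinal → Ordinal} {a ζ b : Ordinal} (hg : IsNormalOn g a)
    (hb : ζ + b ≤ a) : IsNormalOn (fun η => g (ζ + η)) b where
  strictMonoOn x hx y hy hxy :=
    hg.strictMonoOn ((add_le_add_right hx ζ).trans hb) ((add_le_add_right hy ζ).trans hb)
      (add_lt_add_right hxy ζ)
  exists_lt_apply ξ hξ hlim γ hγ := by
    have hζξ : ζ + ξ ≤ a := (add_le_add_right hξ ζ).trans hb
    have hgζ : g ζ < g (ζ + ξ) :=
      hg.strictMonoOn (le_self_add.trans hζξ) hζξ (lt_add_of_pos_right ζ hlim.pos)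
    obtain ⟨η, hη, hγη⟩ := hg.exists_lt_apply _ hζξ (isSuccLimit_add ζ hlim) _ (max_lt hγ hgζ)
    have hζη : ζ ≤ η := by
      by_contra! hηζ
      exact (hg.strictMonoOn (hη.le.trans hζξ) (le_self_add.trans hζξ) hηζ).not_gt
        ((le_max_right _ _).trans_lt hγη)
    obtain ⟨δ, rfl⟩ := exists_add_of_le hζη
    exact ⟨δ, (add_lt_add_iff_left ζ).1 hη, (le_max_left _ _).trans_lt hγη⟩

theorem lift_lt_lift_type_image_CB {α : Ordinal.{v}} {g : Ordinal.{v} → Ordinal.{u}}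
    (hg : IsNormalOn g (ω ^ α)) :
    lift.{u + 1} α < lift.{v} (typeLT (CB '' (g '' Iic (ω ^ α)))) := by
  induction α using WellFoundedLT.induction generalizing g with
  | _ α IH =>
  have hmem : g (ω ^ α) ∈ g '' Iic (ω ^ α) := mem_image_of_mem g self_mem_Iic
  rcases eq_or_ne α 0 with rfl | hα
  · have hne : typeLT (CB '' (g '' Iic (ω ^ (0 : Ordinal)))) ≠ 0 :=
      type_ne_zero_iff_nonempty.2 ⟨⟨_, mem_image_of_mem CB hmem⟩⟩
    exact (lift_zero.trans lift_zero.symm).trans_lt (lift_lt.2 (pos_iff_ne_zero.2 hne))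
  have hg0 : g 0 < g (ω ^ α) :=
    hg.strictMonoOn (mem_Iic.2 zero_le) self_mem_Iic (opow_pos α omega0_pos)
  obtain ⟨γ, hγ, hCB⟩ := exists_forall_Ioo_CB_lt (pos_of_gt hg0).ne'
  obtain ⟨ζ, hζ, hγζ⟩ := hg.exists_lt_apply _ le_rfl
    (isSuccLimit_opow_left isSuccLimit_omega0 hα) γ hγ
  have hα_le : lift.{u + 1} α ≤
      lift.{v} (typeLT (CB '' (g '' Iic (ω ^ α) ∩ Ioo γ (g (ω ^ α))))) := by
    refine le_of_forall_lt fun c hc => ?_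
    obtain ⟨β, hβ, rfl⟩ := lt_lift_iff.1 hc
    have hζβ : ζ + ω ^ β < ω ^ α :=
      isPrincipal_add_omega0_opow α hζ ((opow_lt_opow_iff_right one_lt_omega0).2 hβ)
    refine (IH β hβ (hg.comp_add hζβ.le)).trans_le (lift_le.2 (type_mono (image_mono ?_)))
    rintro _ ⟨η, hη, rfl⟩
    have hζη : ζ + η ≤ ω ^ α := (add_le_add_right hη ζ).trans hζβ.le
    refine ⟨⟨ζ + η, hζη, rfl⟩, hγζ.trans_le ?_, ?_⟩
    · exact hg.strictMonoOn.monotoneOn (le_self_add.trans hζη) hζη le_self_add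
    · exact hg.strictMonoOn hζη self_mem_Iic ((add_le_add_right hη ζ).trans_lt hζβ)
  refine hα_le.trans_lt (lift_lt.2 (type_lt_of_forall_lt (image_mono inter_subset_left)
    (mem_image_of_mem CB hmem) ?_))
  rintro _ ⟨x, hx, rfl⟩
  exact hCB x hx.2

lemma Continuous.exists_lt_apply_of_isSuccLimit {b : Ordinal.{v}} {h : Iio b → Ordinal.{u}}
    (hh : Continuous h) {ξ : Iio b} (hlim : IsSuccLimit (ξ : Ordinal)) {γ : Ordinal}
    (hγ : γ < h ξ) : ∃ η < ξ, γ < h η := by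
  obtain ⟨U, hU, hUh⟩ := isOpen_induced_iff.1 (isOpen_Ioi.preimage hh : IsOpen (h ⁻¹' Ioi γ))
  have hξU : ξ ∈ Subtype.val ⁻¹' U := hUh ▸ hγ
  obtain ⟨δ, hδ, hδU⟩ := SuccOrder.isOpen_iff.1 hU ξ hξU hlim
  have hsucc : succ δ < ξ := hlim.succ_lt hδ
  let η : Iio b := ⟨succ δ, hsucc.trans ξ.2⟩
  have hηU : η ∈ h ⁻¹' Ioi γ := hUh ▸ hδU ⟨lt_succ δ, hsucc⟩
  exact ⟨η, hsucc, hηU⟩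

theorem IsClosedCopy.exists_isNormalOn {X : Set Ordinal} {a : Ordinal}
    (hX : IsClosedCopy X (a + 1)) : ∃ g, IsNormalOn g a ∧ g '' Iic a = X := by
  obtain ⟨f, -, hf⟩ := hX
  let g ξ := if hξ : ξ < a + 1 then (f.symm ⟨ξ, hξ⟩ : Ordinal) else 0
  have hg (ξ : Ordinal) (hξ : ξ ≤ a) : g ξ = f.symm ⟨ξ, lt_add_one_iff.2 hξ⟩ :=
    dif_pos (lt_add_one_iff.2 hξ)
  refine ⟨g, ⟨fun ξ hξ η hη hξη => ?_, fun ξ hξ hlim γ hγ => ?_⟩, ?_⟩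
  · rw [hg ξ hξ, hg η hη]
    exact f.symm.strictMono hξη
  · rw [hg ξ hξ] at hγ
    obtain ⟨⟨η, hηa⟩, hηξ, hγη⟩ :=
      (continuous_subtype_val.comp hf).exists_lt_apply_of_isSuccLimit (ξ := ⟨ξ, _⟩) hlim hγ
    exact ⟨η, hηξ, (hg η (lt_add_one_iff.1 hηa)).symm ▸ hγη⟩
  · ext x
    constructor
    · rintro ⟨ξ, hξ, rfl⟩
      rw [hg ξ hξ]
      exact Subtype.coe_prop _
    · intro hx
      have hξ : (f ⟨x, hx⟩ : Ordinal) ≤ a := lt_add_one_iff.1 (f ⟨x, hx⟩).2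
      have hfx : (⟨_, lt_add_one_iff.2 hξ⟩ : Iio (a + 1)) = f ⟨x, hx⟩ := rfl
      exact ⟨_, hξ, by rw [hg _ hξ, hfx, OrderIso.symm_apply_apply]⟩

theorem nonempty_Iio_add_one_orderEmbedding_image_CB {α : Ordinal.{v}}
    {g : Ordinal.{v} → Ordinal.{u}} (hg : IsNormalOn g (ω ^ α)) :
    Nonempty (Iio (α + 1) ↪o CB '' (g '' Iic (ω ^ α))) := by
  have h : lift.{u + 1} (typeLT (Iio (α + 1))) ≤
      lift.{v + 1} (typeLT (CB '' (g '' Iic (ω ^ α)))) := by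
    simp only [type_lt_Iio, lift_lift, lift_add, lift_one, add_one_le_iff]
    simpa using lift_lt.{v + 1}.2 (lift_lt_lift_type_image_CB hg)
  obtain ⟨e⟩ := lift_type_le.{v + 1, u + 1, 0}.1 h
  exact ⟨RelEmbedding.orderEmbeddingOfLTEmbedding e.toRelEmbedding⟩

theorem stmt_2_general (α : Ordinal)
    (X : Set Ordinal)
    (hcopy : IsClosedCopy X (Ordinal.omega0 ^ α + 1)) :
    Nonempty (Set.Iio (α + 1) ↪o (CB '' X)) := by
  obtain ⟨g, hg, rfl⟩ := hcopy.exists_isNormalOn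
  exact nonempty_Iio_add_one_orderEmbedding_image_CB hg

/-- If `1 ≤ α ≤ θ < ω₁` and `X ⊆ ω^θ + 1` is a closed copy of `ω^α + 1`, then the
order type of `CB '' X = {CB x : x ∈ X}` is at least `α + 1` (expressed by the
existence of an order embedding of `Iio (α+1)` into `CB '' X`). -/
theorem stmt_2 (α θ : Ordinal) (h1 : 1 ≤ α) (h2 : α ≤ θ) (h3 : θ < omega1)
    (X : Set Ordinal) (hX : X ⊆ Set.Iio (Ordinal.omega0 ^ θ + 1))
    (hcopy : IsClosedCopy X (Ordinal.omega0 ^ α + 1)) :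
    Nonempty (Set.Iio (α + 1) ↪o (CB '' X)) :=
  stmt_2_general α X hcopy
end

section
/- Let 1 ≤ α ≤ θ < ω₁ and let X ⊆ ω^θ be a closed copy of ω^α (an order-homeomorphic copy). Then the order type of the set CB(X) = {CB(x) : x ∈ X} is at least α. -/
/-!
Every nonzero ordinal `y` is `m + ω ^ CB y` for some `m`. Hence, if `β < CB y`, then `y` is
the supremum of the ordinals `u + ω ^ β` (`u < y`), all of rank `β`; conversely every ordinal
in `(m, y)` is `m + w` with `0 < w < ω ^ CB y`, so its rank is below `CB y`.

Let `f : X → ω ^ α` be the order-homeomorphism. If `β < CB (f y)`, then `f y` is a limit from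
below of points of rank `β`; pulling them back along the continuous `f⁻¹`, `y` is a limit from
below of points `x` with `CB (f x) = β`, and one of them has `CB x < CB y`. Thus
`β ↦ min {CB x | CB (f x) = β}` is strictly increasing on `α` (the set is nonempty since
`CB (ω ^ β) = β`), which embeds `α` into `CB '' X`.
-/

open Ordinal Set

namespace Ordinal

theorem foldr_opow_mul_add_eq_add (b r : Ordinal) (l : List (Ordinal × Ordinal)) :
    l.foldr (fun p s ↦ b ^ p.1 * p.2 + s) r = l.foldr (fun p s ↦ b ^ p.1 * p.2 + s) 0 + r := by
  induction l with
  | nil => simp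
  | cons p l ih => simp only [List.foldr_cons, ih, add_assoc]

theorem add_lt_of_lt_add_omega0_opow {u m c e : Ordinal} (hu : u < m + ω ^ e) (hc : c < ω ^ e) :
    u + c < m + ω ^ e := by
  rcases lt_or_ge u m with hum | hmu
  · exact (add_le_add_left hum.le c).trans_lt ((add_lt_add_iff_left m).mpr hc)
  · rw [← Ordinal.add_sub_cancel_of_le hmu, add_assoc]
    rw [← Ordinal.add_sub_cancel_of_le hmu, add_lt_add_iff_left] at hu
    exact (add_lt_add_iff_left m).mpr (isPrincipal_add_omega0_opow e hu hc)

theorem eq_of_add_omega0_opow_eq {m m' a b : Ordinal} (h : m + ω ^ a = m' + ω ^ b) :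
    a = b := by
  have not_lt_of_eq : ∀ {m m' a b : Ordinal}, m + ω ^ a = m' + ω ^ b → ¬ a < b := by
    intro m m' a b h hab
    exact (add_lt_of_lt_add_omega0_opow (h ▸ lt_add_of_pos_right m (opow_pos a omega0_pos))
        ((opow_lt_opow_iff_right one_lt_omega0).mpr hab)).ne h
  exact le_antisymm (le_of_not_gt (not_lt_of_eq h.symm)) (le_of_not_gt (not_lt_of_eq h))

end Ordinal

theorem CB_zero : CB 0 = 0 := by
  simp [CB, CNF.zero_right]

theorem exists_eq_add_omega0_opow_CB {o : Ordinal} (ho : o ≠ 0) : ∃ m, o = m + ω ^ CB o := by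
  obtain ⟨p, hp⟩ : ∃ p, (CNF ω o).getLast? = some p :=
    Option.isSome_iff_exists.mp (List.getLast?_isSome.mpr (by simp [CNF.ne_zero ho]))
  have hmem := List.mem_of_getLast? hp
  obtain ⟨n, hn⟩ := lt_omega0.mp (CNF.snd_lt one_lt_omega0 hmem)
  obtain ⟨k, rfl⟩ : ∃ k, n = k + 1 :=
    Nat.exists_eq_add_one.mpr (by exact_mod_cast hn ▸ CNF.snd_pos hmem)
  -- `o` is the sum of its CNF terms, the last of which is `ω ^ p.1 * (k + 1)`
  refine ⟨(CNF ω o).dropLast.foldr (fun p s ↦ ω ^ p.1 * p.2 + s) 0 + ω ^ p.1 * k, ?_⟩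
  conv_lhs => rw [← CNF.foldr ω o, ← List.dropLast_append_getLast? p hp, List.foldr_append,
    foldr_opow_mul_add_eq_add]
  simp [CB, hp, hn, mul_add, add_assoc]

theorem CB_add_omega0_opow (m e : Ordinal) : CB (m + ω ^ e) = e := by
  obtain ⟨m', h⟩ := exists_eq_add_omega0_opow_CB
    (add_pos_of_nonneg_of_pos zero_le (opow_pos e omega0_pos)).ne'
  exact (eq_of_add_omega0_opow_eq h).symm

theorem CB_omega0_opow (e : Ordinal) : CB (ω ^ e) = e := by
  simpa using CB_add_omega0_opow 0 e

theorem CB_add {b : Ordinal} (a : Ordinal) (hb : b ≠ 0) : CB (a + b) = CB b := by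
  obtain ⟨m, hm⟩ := exists_eq_add_omega0_opow_CB hb
  calc CB (a + b) = CB (a + m + ω ^ CB b) := by rw [add_assoc, ← hm]
    _ = CB b := CB_add_omega0_opow _ _

theorem CB_lt_of_lt_omega0_opow {w e : Ordinal} (hw : w ≠ 0) (h : w < ω ^ e) : CB w < e := by
  obtain ⟨m, hm⟩ := exists_eq_add_omega0_opow_CB hw
  exact (opow_lt_opow_iff_right one_lt_omega0).mp (le_add_self.trans_lt (hm ▸ h))

theorem mem_closure_setOf_lt_and_CB_eq {y β : Ordinal} (hβ : β < CB y) :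
    y ∈ closure {z | z < y ∧ CB z = β} := by
  have hy : y ≠ 0 := by rintro rfl; simp [CB_zero] at hβ
  obtain ⟨m, hm⟩ := exists_eq_add_omega0_opow_CB hy
  have mem : ∀ u < y, u + ω ^ β ∈ {z | z < y ∧ CB z = β} := fun u hu ↦
    ⟨hm ▸ add_lt_of_lt_add_omega0_opow (hm ▸ hu) ((opow_lt_opow_iff_right one_lt_omega0).mpr hβ),
      CB_add_omega0_opow u β⟩
  refine IsLUB.mem_closure ⟨fun z hz ↦ hz.1.le, fun b hb ↦ ?_⟩ ⟨_, mem 0 (pos_iff_ne_zero.mpr hy)⟩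
  by_contra! hby
  exact (hb (mem b hby)).not_gt (lt_add_of_pos_right b (opow_pos β omega0_pos))

theorem exists_CB_lt_of_mem_closure {y : Ordinal} {T : Set Ordinal} (hT : T ⊆ Iio y)
    (hy : y ∈ closure T) : ∃ t ∈ T, CB t < CB y := by
  rcases eq_or_ne y 0 with rfl | hy0
  · simp [subset_empty_iff.mp (by simpa using hT)] at hy
  obtain ⟨m, hm⟩ := exists_eq_add_omega0_opow_CB hy0
  obtain ⟨t, hmt, htT⟩ := mem_closure_iff.mp hy (Ioi m) isOpen_Ioi
    (hm ▸ lt_add_of_pos_right m (opow_pos _ omega0_pos))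
  refine ⟨t, htT, ?_⟩
  have hw : t - m ≠ 0 := Ordinal.sub_ne_zero_iff_lt.mpr hmt
  have hty : m + (t - m) < m + ω ^ CB y := by
    rw [Ordinal.add_sub_cancel_of_le hmt.le, ← hm]; exact hT htT
  rw [← Ordinal.add_sub_cancel_of_le hmt.le, CB_add m hw]
  exact CB_lt_of_lt_omega0_opow hw ((add_lt_add_iff_left m).mp hty)

theorem exists_CB_apply_eq_and_CB_lt {X : Set Ordinal} {γ : Ordinal} (f : X ≃o Iio γ)
    (hf : Continuous f.symm) {y : X} {β : Ordinal} (hβ : β < CB (f y)) :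
    ∃ x : X, CB (f x) = β ∧ CB x < CB y := by
  set A : Set (Iio γ) := {z | z < f y ∧ CB z = β}
  have hA : f y ∈ closure A := by
    rw [closure_subtype]
    convert mem_closure_setOf_lt_and_CB_eq hβ using 2
    ext z
    exact ⟨fun ⟨z, hz, hzz⟩ ↦ hzz ▸ hz, fun hz ↦ ⟨⟨z, hz.1.trans (f y).2⟩, hz, rfl⟩⟩
  have hy : (y : Ordinal) ∈ closure (Subtype.val '' (f.symm '' A)) := by
    rw [← closure_subtype]
    simpa using image_closure_subset_closure_image hf (mem_image_of_mem f.symm hA)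
  have hT : Subtype.val '' (f.symm '' A) ⊆ Iio (y : Ordinal) := by
    rintro _ ⟨_, ⟨z, hz, rfl⟩, rfl⟩
    exact f.symm_apply_lt.mpr hz.1
  obtain ⟨_, ⟨_, ⟨z, hz, rfl⟩, rfl⟩, hlt⟩ := exists_CB_lt_of_mem_closure hT hy
  exact ⟨f.symm z, by simpa using hz.2, hlt⟩

theorem stmt_3_general (α : Ordinal) (X : Set Ordinal) (hcopy : IsClosedCopy X (Ordinal.omega0 ^ α)) :
    Nonempty (Set.Iio α ↪o (CB '' X)) := by
  obtain ⟨f, -, hf⟩ := hcopy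
  let S : Ordinal → Set Ordinal := fun β ↦ (fun x : X ↦ CB x) '' {x | CB (f x) = β}
  have mem : ∀ β < α, sInf (S β) ∈ S β := fun β hβ ↦ csInf_mem ⟨_,
    f.symm ⟨ω ^ β, (opow_lt_opow_iff_right one_lt_omega0).mpr hβ⟩, by simp [CB_omega0_opow], rfl⟩
  have hmono : ∀ β β', β < β' → β' < α → sInf (S β) < sInf (S β') := by
    intro β β' hβ hβ'
    obtain ⟨y, hy, hSy⟩ := mem β' hβ'
    obtain ⟨x, hx, hxy⟩ := exists_CB_apply_eq_and_CB_lt f hf (hy.symm ▸ hβ)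
    calc sInf (S β) ≤ CB x := csInf_le' (mem_image_of_mem _ hx)
      _ < CB y := hxy
      _ = sInf (S β') := hSy
  refine ⟨OrderEmbedding.ofStrictMono (fun β ↦ ⟨sInf (S β), ?_⟩) fun β β' h ↦ hmono β β' h β'.2⟩
  obtain ⟨x, -, hx⟩ := mem β β.2
  exact ⟨x, x.2, hx⟩

/-- If `1 ≤ α ≤ θ < ω₁` and `X ⊆ ω^θ` is a closed copy of `ω^α`, then the order
type of `CB '' X` is at least `α` (expressed by an order embedding of `Iio α`
into `CB '' X`). -/
theorem stmt_3 (α θ : Ordinal) (h1 : 1 ≤ α) (h2 : α ≤ θ) (h3 : θ < omega1)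
    (X : Set Ordinal) (hX : X ⊆ Set.Iio (Ordinal.omega0 ^ θ))
    (hcopy : IsClosedCopy X (Ordinal.omega0 ^ α)) :
    Nonempty (Set.Iio α ↪o (CB '' X)) :=
  stmt_3_general α X hcopy
end

section
/- For every integer k ≥ 3 there exists an integer m ≥ 1 such that for every coloring c of the ordered pairs of distinct elements of an m-element set with 3 colors, there is a subset S of size k such that for every x ∈ S, the set of colors {c(y,x) : y ∈ S, y ≠ x} omits at least one of the three colors. -/
open Ordinal Set

/-- Avoidance property: every 3-coloring of ordered pairs of `Fin m` admits a
`k`-element subset `S` such that every `x ∈ S` has its incoming edges from `S`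
avoiding some color. -/
def AvoidProp (m k : ℕ) : Prop :=
  ∀ c : Fin m → Fin m → Fin 3,
    ∃ S : Finset (Fin m), S.card = k ∧
      ∀ x ∈ S, ∃ i : Fin 3, ∀ y ∈ S, y ≠ x → c y x ≠ i

/-- `A₃(k)`: the least `m ≥ 1` with the avoidance property. -/
noncomputable def A3 (k : ℕ) : ℕ := sInf {m | 1 ≤ m ∧ AvoidProp m k}

/-- Every 3-coloring of unordered pairs of `Fin m` has a monochromatic
`k`-element subset. -/
def Ramsey3Prop (m k : ℕ) : Prop :=
  ∀ c : Sym2 (Fin m) → Fin 3,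
    ∃ S : Finset (Fin m), S.card = k ∧
      ∃ i : Fin 3, ∀ x ∈ S, ∀ y ∈ S, x ≠ y → c s(x, y) = i

/-- The classical 3-color Ramsey number `R(k,k,k)`. -/
noncomputable def R3 (k : ℕ) : ℕ := sInf {m | Ramsey3Prop m k}

/-- Every 2-coloring of unordered pairs of `Fin m` has a `0`-monochromatic
`a`-subset or a `1`-monochromatic `b`-subset. -/
def Ramsey2Prop (m a b : ℕ) : Prop :=
  ∀ c : Sym2 (Fin m) → Fin 2,
    (∃ S : Finset (Fin m), S.card = a ∧ ∀ x ∈ S, ∀ y ∈ S, x ≠ y → c s(x, y) = 0) ∨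
    (∃ S : Finset (Fin m), S.card = b ∧ ∀ x ∈ S, ∀ y ∈ S, x ≠ y → c s(x, y) = 1)

/-- The classical 2-color Ramsey number `R(a,b)`. -/
noncomputable def R2 (a b : ℕ) : ℕ := sInf {m | Ramsey2Prop m a b}

/-- Every 2-coloring of the edges of the complete directed graph on `m` vertices
contains a red complete directed subgraph on `n` vertices or a blue transitive
tournament on 3 vertices. -/
def DirRamseyProp (m n : ℕ) : Prop :=
  ∀ c : Fin m → Fin m → Fin 2,
    (∃ S : Finset (Fin m), S.card = n ∧ ∀ x ∈ S, ∀ y ∈ S, x ≠ y → c x y = 0) ∨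
    (∃ x y z : Fin m, x ≠ y ∧ y ≠ z ∧ x ≠ z ∧ c x y = 1 ∧ c y z = 1 ∧ c x z = 1)

/-- The Ramsey number `R(K_n^*, L₃)`. -/
noncomputable def RKL3 (n : ℕ) : ℕ := sInf {m | DirRamseyProp m n}

/-!
Colour the pair `x < y` by the ordered pair of colours `(c x y, c y x)`. By Ramsey's theorem
for these nine colours there is a `k`-set on which this colour is a constant `(a, b)`: every
vertex receives colour `a` from the vertices below it and `b` from those above it, so it
misses any third colour.
-/

open Finset

variable {α κ : Type*} [LinearOrder α]

def IsEndHomogeneous (c : α → α → κ) (S : Finset α) : Prop :=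
  ∀ x ∈ S, ∃ i, ∀ y ∈ S, x < y → c x y = i

theorem IsEndHomogeneous.insert_of_forall_lt {c : α → α → κ} {S : Finset α}
    (hS : IsEndHomogeneous c S) {v : α} {i : κ} (hv : ∀ y ∈ S, v < y ∧ c v y = i) :
    IsEndHomogeneous c (insert v S) := by
  intro x hx
  rcases mem_insert.mp hx with rfl | hxS
  · refine ⟨i, fun y hy hxy => ?_⟩
    rcases mem_insert.mp hy with rfl | hyS
    · exact absurd hxy (lt_irrefl _)
    · exact (hv y hyS).2
  · obtain ⟨j, hj⟩ := hS x hxS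
    refine ⟨j, fun y hy hxy => ?_⟩
    rcases mem_insert.mp hy with rfl | hyS
    · exact absurd hxy (hv x hxS).1.asymm
    · exact hj y hyS hxy

variable [Fintype κ]

/-- Repeatedly take the least element and keep its largest colour class among the rest. -/
theorem exists_isEndHomogeneous (c : α → α → κ) (n : ℕ) (V : Finset α)
    (hV : (Fintype.card κ + 1) ^ n ≤ #V) :
    ∃ S ⊆ V, #S = n ∧ IsEndHomogeneous c S := by
  classical
  induction n generalizing V with
  | zero => exact ⟨∅, empty_subset V, rfl, fun x hx => absurd hx (notMem_empty x)⟩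
  | succ n ih =>
    have hne : V.Nonempty := card_pos.mp (lt_of_lt_of_le (by positivity) hV)
    set v := V.min' hne
    have hrest : #(univ : Finset κ) * (Fintype.card κ + 1) ^ n ≤ #(V.erase v) := by
      rw [card_erase_of_mem (V.min'_mem hne), Finset.card_univ]
      rw [pow_succ', add_one_mul] at hV
      have : 0 < (Fintype.card κ + 1) ^ n := by positivity
      omega
    obtain ⟨i, -, hi⟩ := exists_le_card_fiber_of_mul_le_card_of_maps_to
      (fun y _ => mem_univ (c v y)) (univ_nonempty_iff.mpr ⟨c v v⟩) hrest
    obtain ⟨S, hSsub, hScard, hS⟩ := ih _ hi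
    have hv : ∀ y ∈ S, v < y ∧ c v y = i := by
      intro y hy
      obtain ⟨hyV', hcy⟩ := mem_filter.mp (hSsub hy)
      exact ⟨(V.min'_le y (mem_of_mem_erase hyV')).lt_of_ne (ne_of_mem_erase hyV').symm, hcy⟩
    have hvS : v ∉ S := fun h => lt_irrefl v (hv v h).1
    refine ⟨insert v S, insert_subset (V.min'_mem hne) ?_, ?_, hS.insert_of_forall_lt hv⟩
    · exact hSsub.trans ((filter_subset _ _).trans (erase_subset v V))
    · rw [card_insert_of_notMem hvS, hScard]

theorem exists_monochromatic [Nonempty κ] (c : α → α → κ) (k : ℕ) (V : Finset α)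
    (hV : (Fintype.card κ + 1) ^ (Fintype.card κ * k) ≤ #V) :
    ∃ S ⊆ V, #S = k ∧ ∃ i, ∀ x ∈ S, ∀ y ∈ S, x < y → c x y = i := by
  classical
  obtain ⟨S, hSV, hScard, hS⟩ := exists_isEndHomogeneous c _ V hV
  choose! f hf using hS
  obtain ⟨i, -, hi⟩ := exists_le_card_fiber_of_mul_le_card_of_maps_to
    (fun x _ => mem_univ (f x)) univ_nonempty (by rw [Finset.card_univ, hScard])
  obtain ⟨T, hTsub, hTcard⟩ := exists_subset_card_eq hi
  refine ⟨T, hTsub.trans ((filter_subset _ _).trans hSV), hTcard, i, fun x hx y hy hxy => ?_⟩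
  obtain ⟨hxS, hfx⟩ := mem_filter.mp (hTsub hx)
  exact hfx ▸ hf x hxS y (mem_filter.mp (hTsub hy)).1 hxy

theorem stmt_6_general (k : ℕ) :
    ∃ m : ℕ, 1 ≤ m ∧
      ∀ c : Fin m → Fin m → Fin 3,
        ∃ S : Finset (Fin m), S.card = k ∧
          ∀ x ∈ S, ∃ i : Fin 3, ∀ y ∈ S, y ≠ x → c y x ≠ i := by
  refine ⟨10 ^ (9 * k), Nat.one_le_pow _ _ (by norm_num), fun c => ?_⟩
  obtain ⟨S, -, hS, ⟨a, b⟩, hab⟩ :=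
    exists_monochromatic (fun x y => (c x y, c y x)) k univ (by simp)
  refine ⟨S, hS, fun x hx => ?_⟩
  obtain ⟨i, hia, hib⟩ : ∃ i : Fin 3, i ≠ a ∧ i ≠ b := by
    have : ∀ a b : Fin 3, ∃ i, i ≠ a ∧ i ≠ b := by decide
    exact this a b
  refine ⟨i, fun y hy hyx => ?_⟩
  rcases hyx.lt_or_gt with hyx | hxy
  · exact (Prod.mk.inj (hab y hy x hx hyx)).1.trans_ne hia.symm
  · exact (Prod.mk.inj (hab x hx y hy hxy)).2.trans_ne hib.symm

/-- For every `k ≥ 3` there is `m ≥ 1` such that every 3-coloring of ordered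
pairs of distinct elements of an `m`-element set admits a `k`-subset `S` in
which every vertex's incoming edges from `S` avoid at least one color. -/
theorem stmt_6 (k : ℕ) (hk : 3 ≤ k) :
    ∃ m : ℕ, 1 ≤ m ∧
      ∀ c : Fin m → Fin m → Fin 3,
        ∃ S : Finset (Fin m), S.card = k ∧
          ∀ x ∈ S, ∃ i : Fin 3, ∀ y ∈ S, y ≠ x → c y x ≠ i :=
  stmt_6_general k
end

section
/- ω^4 ↛_cl (ω·2 + 1, 3)²: there exists a coloring c : [ω^4]² → {0,1} such that no 3-element subset of ω^4 is homogeneous in color 1 and no subset of ω^4 order-homeomorphic to ω·2 + 1 is homogeneous in color 0. -/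
open Ordinal Set

/-!
Write the ordinals below `ω ^ 4` as `ω ^ 3 * a + ω ^ 2 * b + ω * c + d` with natural digits, so
that their order is the lexicographic order of the digits. Blue pairs are given by explicit rules
on the digits (`Digits.Blue`); any three of them are inconsistent as linear constraints on the
digits of a triangle.

A closed copy of `ω * 2 + 1` contains points `p < q`, the images of `ω` and `ω * 2`, that are
limits from the left of the copy. If the copy is red, rule `r01` forces such limits to have
`c = d = 0`. In each of the four cases according to whether `b = 0` for `p` and for `q`, points of
the copy chosen just below `p` and `q` are forced into digit shapes for which some pair among
them, `p` and `q` is blue.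
-/

namespace Ordinal

theorem mul_add_lt_mul_of_lt {B a a' r : Ordinal} (hr : r < B) (h : a < a') :
    B * a + r < B * a' :=
  calc B * a + r < B * a + B := add_lt_add_right hr _
    _ = B * (a + 1) := (mul_add_one B a).symm
    _ ≤ B * a' := mul_le_mul_right (Order.add_one_le_of_lt h) B

theorem mul_add_lt_mul_add_iff {B a a' r s : Ordinal} (hr : r < B) (hs : s < B) :
    B * a + r < B * a' + s ↔ a < a' ∨ a = a' ∧ r < s := by
  constructor
  · intro h
    rcases lt_trichotomy a a' with ha | rfl | ha
    · exact .inl ha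
    · exact .inr ⟨rfl, (add_lt_add_iff_left _).mp h⟩
    · exact absurd h ((mul_add_lt_mul_of_lt hs ha).trans_le (le_self_add)).not_gt
  · rintro (ha | ⟨rfl, hrs⟩)
    · exact (mul_add_lt_mul_of_lt hr ha).trans_le le_self_add
    · exact add_lt_add_right hrs _

theorem mul_natCast_add_lt_mul_omega0 {B r : Ordinal} (hr : r < B) (n : ℕ) :
    B * n + r < B * ω :=
  mul_add_lt_mul_of_lt hr (natCast_lt_omega0 n)

theorem exists_mul_natCast_add_of_lt_mul_omega0 {B x : Ordinal} (hx : x < B * ω) :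
    ∃ n : ℕ, ∃ r < B, B * n + r = x := by
  have hB : B ≠ 0 := by rintro rfl; simp at hx
  obtain ⟨n, hn⟩ := lt_omega0.mp ((lt_mul_iff_div_lt hB).mp hx)
  exact ⟨n, x % B, mod_lt x hB, hn ▸ div_add_mod x B⟩

theorem omega0_mul_add_lt (c d : ℕ) : ω * c + d < ω ^ 2 :=
  pow_two ω ▸ mul_natCast_add_lt_mul_omega0 (natCast_lt_omega0 d) c

theorem omega0_pow_two_mul_add_lt (b c d : ℕ) : ω ^ 2 * b + (ω * c + d) < ω ^ 3 :=
  pow_succ ω 2 ▸ mul_natCast_add_lt_mul_omega0 (omega0_mul_add_lt c d) b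

theorem omega0_opow_four : ω ^ (4 : Ordinal) = ω ^ 4 := by
  rw [← opow_natCast, Nat.cast_ofNat]

theorem exists_lt_apply_of_isSuccLimit {T : Ordinal} {g : Iio T → Ordinal}
    (hg : Continuous g) {v : Iio T} (hv : Order.IsSuccLimit (v : Ordinal)) {t : Ordinal}
    (ht : t < g v) : ∃ m < v, t < g m := by
  have hmem : g ⁻¹' Ioi t ∈ nhds v := hg.continuousAt.preimage_mem_nhds (isOpen_Ioi.mem_nhds ht)
  obtain ⟨l, hl, hsub⟩ :=
    exists_Ioc_subset_of_mem_nhds hmem ⟨⟨0, hv.pos.trans v.2⟩, Subtype.mk_lt_mk.mpr hv.pos⟩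
  have hlv : Order.succ (l : Ordinal) < v := hv.succ_lt hl
  exact ⟨⟨Order.succ l, hlv.trans v.2⟩, hlv, hsub ⟨Order.lt_succ (l : Ordinal), hlv.le⟩⟩

end Ordinal

def IsLeftLimit {α : Type*} [Preorder α] (Y : Set α) (p : α) : Prop :=
  (Iio p).Nonempty ∧ ∀ t < p, ∃ y ∈ Y, t < y ∧ y < p

theorem IsLeftLimit.preimage {α β : Type*} [LinearOrder α] [Preorder β] {f : α → β}
    (hf : StrictMono f) {X : Set β} (hX : X ⊆ range f) {u : α} (h : IsLeftLimit X (f u)) :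
    IsLeftLimit (f ⁻¹' X) u := by
  have key : ∀ t < f u, ∃ s ∈ f ⁻¹' X, t < f s ∧ s < u := by
    intro t ht
    obtain ⟨y, hy, hty, hyu⟩ := h.2 t ht
    obtain ⟨s, rfl⟩ := hX hy
    exact ⟨s, hy, hty, hf.lt_iff_lt.mp hyu⟩
  obtain ⟨t, ht⟩ := h.1
  obtain ⟨s, -, -, hs⟩ := key t ht
  refine ⟨⟨s, hs⟩, fun t ht ↦ ?_⟩
  obtain ⟨s, hs, hts, hsu⟩ := key (f t) (hf ht)
  exact ⟨s, hs, hf.lt_iff_lt.mp hts, hsu⟩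

theorem isLeftLimit_symm_apply {X : Set Ordinal} {T : Ordinal} (f : X ≃o Iio T)
    (hf : Continuous f.symm) {v : Iio T} (hv : Order.IsSuccLimit (v : Ordinal)) :
    IsLeftLimit X (f.symm v : Ordinal) := by
  have hg : Continuous fun u ↦ (f.symm u : Ordinal) := continuous_subtype_val.comp hf
  refine ⟨⟨f.symm ⟨0, hv.pos.trans v.2⟩, f.symm.lt_iff_lt.mpr hv.pos⟩, fun t ht ↦ ?_⟩
  obtain ⟨m, hmv, htm⟩ := exists_lt_apply_of_isSuccLimit hg hv ht
  exact ⟨f.symm m, (f.symm m).2, htm, f.symm.lt_iff_lt.mpr hmv⟩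

theorem IsClosedCopy.exists_isLeftLimit_pair {X : Set Ordinal} (h : IsClosedCopy X (ω * 2 + 1)) :
    ∃ p ∈ X, ∃ q ∈ X, p < q ∧ IsLeftLimit X p ∧ IsLeftLimit X q := by
  obtain ⟨f, -, hf⟩ := h
  have hω : ω < ω * 2 := by simp
  have h2 : ω * 2 < ω * 2 + 1 := lt_add_one _
  exact ⟨_, (f.symm ⟨ω, hω.trans h2⟩).2, _, (f.symm ⟨ω * 2, h2⟩).2, f.symm.lt_iff_lt.mpr hω,
    isLeftLimit_symm_apply f hf isSuccLimit_omega0,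
    isLeftLimit_symm_apply f hf (isSuccLimit_mul_left isSuccLimit_omega0 two_pos)⟩

@[ext]
structure Digits where
  a : ℕ
  b : ℕ
  c : ℕ
  d : ℕ

namespace Digits

instance : Inhabited Digits := ⟨⟨0, 0, 0, 0⟩⟩

def toProdLex (u : Digits) : ℕ ×ₗ ℕ ×ₗ ℕ ×ₗ ℕ :=
  toLex (u.a, toLex (u.b, toLex (u.c, u.d)))

theorem toProdLex_injective : Function.Injective toProdLex := by
  intro u v h
  simp only [toProdLex, toLex_inj, Prod.mk.injEq] at h
  ext <;> simp [h]

instance : LinearOrder Digits := LinearOrder.lift' toProdLex toProdLex_injective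

theorem lt_iff {u v : Digits} : u < v ↔ u.a < v.a ∨ u.a = v.a ∧
    (u.b < v.b ∨ u.b = v.b ∧ (u.c < v.c ∨ u.c = v.c ∧ u.d < v.d)) := by
  change toProdLex u < toProdLex v ↔ _
  simp only [toProdLex, Prod.Lex.toLex_lt_toLex]

theorem mk_lt_iff {a b c d : ℕ} {v : Digits} : mk a b c d < v ↔ a < v.a ∨ a = v.a ∧
    (b < v.b ∨ b = v.b ∧ (c < v.c ∨ c = v.c ∧ d < v.d)) :=
  lt_iff

def val (u : Digits) : Ordinal :=
  ω ^ 3 * u.a + (ω ^ 2 * u.b + (ω * u.c + u.d))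

theorem val_lt_val {u v : Digits} : val u < val v ↔ u < v := by
  simp only [val, lt_iff,
    mul_add_lt_mul_add_iff (omega0_pow_two_mul_add_lt _ _ _) (omega0_pow_two_mul_add_lt _ _ _),
    mul_add_lt_mul_add_iff (omega0_mul_add_lt _ _) (omega0_mul_add_lt _ _),
    mul_add_lt_mul_add_iff (natCast_lt_omega0 _) (natCast_lt_omega0 _), Nat.cast_lt, Nat.cast_inj]

theorem val_strictMono : StrictMono val := fun _ _ ↦ val_lt_val.mpr

theorem exists_val_eq {x : Ordinal} (hx : x < ω ^ (4 : Ordinal)) : ∃ u, val u = x := by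
  rw [omega0_opow_four, pow_succ] at hx
  obtain ⟨a, y, hy, rfl⟩ := exists_mul_natCast_add_of_lt_mul_omega0 hx
  rw [pow_succ] at hy
  obtain ⟨b, z, hz, rfl⟩ := exists_mul_natCast_add_of_lt_mul_omega0 hy
  rw [pow_two] at hz
  obtain ⟨c, w, hw, rfl⟩ := exists_mul_natCast_add_of_lt_mul_omega0 hz
  obtain ⟨d, rfl⟩ := lt_omega0.mp hw
  exact ⟨⟨a, b, c, d⟩, rfl⟩

/-- Writing `x = ω ^ 3 * a + ω ^ 2 * b + ω * c + d`, say `x` has rank 0 if `d ≠ 0`, and rank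
1, 2 or 3 if its last nonzero digit is `c`, `b` or `a`. Constructor `rij` joins a point of rank
`i` to one of rank `j`; the `far` variants ask for a jump of at least two in a digit. -/
inductive Blue (x y : Digits) : Prop
  | r01 : x.c < x.d → y.a = x.a → y.b = x.b → y.c = x.c + 1 → y.d = 0 → Blue x y
  | r02 : x.d ≠ 0 → x.d ≤ x.c → x.b < x.c →
      y.a = x.a → y.b = x.b + 1 → y.c = 0 → y.d = 0 → Blue x y
  | r02_far : x.c < x.d → x.b ≤ x.c → y.a = x.a → x.b + 2 ≤ y.b → y.c = 0 → y.d = 0 → Blue x y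
  | r03 : x.d ≠ 0 → x.d ≤ x.c ∨ x.c < x.b →
      y.a = x.a + 1 → y.b = 0 → y.c = 0 → y.d = 0 → Blue x y
  | r03_far : x.c < x.d → x.b ≤ x.c → x.a + 2 ≤ y.a → y.b = 0 → y.c = 0 → y.d = 0 → Blue x y
  | r12 : x.d = 0 → x.b < x.c → y.a = x.a → y.b = x.b + 1 → y.c = 0 → y.d = 0 → Blue x y
  | r13 : x.d = 0 → x.b < x.c → y.a = x.a + 1 → y.b = 0 → y.c = 0 → y.d = 0 → Blue x y
  | r13_far : x.d = 0 → x.c ≠ 0 → x.c ≤ x.b →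
      x.a + 2 ≤ y.a → y.b = 0 → y.c = 0 → y.d = 0 → Blue x y
  | r20 : x.d = 0 → x.c = 0 → x.b ≠ 0 → y.d ≠ 0 → y.b ≤ y.c → x.b ≤ y.c → Blue x y
  | r21 : x.d = 0 → x.c = 0 → x.b ≠ 0 → y.d = 0 → y.c ≠ 0 → y.c ≤ y.b → Blue x y
  | r32 : x.d = 0 → x.c = 0 → x.b = 0 → x.a ≠ 0 → y.d = 0 → y.c = 0 → y.b ≠ 0 → Blue x y

theorem Blue.not_triangle {x y z : Digits} (hyz : y < z) (hxy : Blue x y) (hyz' : Blue y z)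
    (hxz : Blue x z) : False := by
  rw [lt_iff] at hyz
  cases hxy <;> cases hyz' <;> cases hxz <;> omega

open scoped Classical in
noncomputable def coloring (x y : Ordinal) : Fin 2 :=
  if Blue (Function.invFun val x) (Function.invFun val y) then 1 else 0

theorem coloring_val_eq_one {u v : Digits} : coloring (val u) (val v) = 1 ↔ Blue u v := by
  simp [coloring, Function.leftInverse_invFun val_strictMono.injective _]

theorem coloring_val_eq_zero {u v : Digits} : coloring (val u) (val v) = 0 ↔ ¬ Blue u v := by
  simp [coloring, Function.leftInverse_invFun val_strictMono.injective _]

def BlueFree (Y : Set Digits) : Prop := ∀ x ∈ Y, ∀ y ∈ Y, x < y → ¬ Blue x y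

variable {Y : Set Digits} {p q r s x : Digits}

theorem d_eq_zero_of_isLeftLimit (hs : IsLeftLimit Y s) : s.d = 0 := by
  by_contra hd
  obtain ⟨x, -, htx, hxs⟩ := hs.2 ⟨s.a, s.b, s.c, s.d - 1⟩ (mk_lt_iff.mpr (by omega))
  have := mk_lt_iff.mp htx
  have := lt_iff.mp hxs
  omega

theorem a_ne_zero_of_isLeftLimit (hl : IsLeftLimit Y s) (hb : s.b = 0) (hc : s.c = 0) :
    s.a ≠ 0 := by
  obtain ⟨t, ht⟩ := hl.1
  have := lt_iff.mp ht
  have := d_eq_zero_of_isLeftLimit hl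
  omega

namespace BlueFree

theorem c_eq_zero_and_d_eq_zero (hY : BlueFree Y) (hs : s ∈ Y) (hl : IsLeftLimit Y s) :
    s.c = 0 ∧ s.d = 0 := by
  have hd := d_eq_zero_of_isLeftLimit hl
  refine ⟨?_, hd⟩
  by_contra hc
  obtain ⟨x, hx, htx, hxs⟩ := hl.2 ⟨s.a, s.b, s.c - 1, s.c - 1⟩ (mk_lt_iff.mpr (by omega))
  have := mk_lt_iff.mp htx
  have := lt_iff.mp hxs
  exact hY x hx s hs hxs (.r01 (by omega) (by omega) (by omega) (by omega) hd)

theorem exists_mem_lt_of_rank_two (hY : BlueFree Y) (hs : s ∈ Y) (hl : IsLeftLimit Y s)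
    (hb : s.b ≠ 0) {N : ℕ} (hN : s.b ≤ N) :
    ∃ x ∈ Y, x < s ∧ x.a = s.a ∧ x.b + 1 = s.b ∧ N ≤ x.c ∧ x.c < x.d := by
  obtain ⟨hc, hd⟩ := hY.c_eq_zero_and_d_eq_zero hs hl
  obtain ⟨x, hx, htx, hxs⟩ := hl.2 ⟨s.a, s.b - 1, N, 0⟩ (mk_lt_iff.mpr (by omega))
  have := mk_lt_iff.mp htx
  have := lt_iff.mp hxs
  refine ⟨x, hx, hxs, by omega, by omega, by omega, ?_⟩
  by_contra! hdc
  rcases eq_or_ne x.d 0 with hxd | hxd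
  · exact hY x hx s hs hxs (.r12 hxd (by omega) (by omega) (by omega) hc hd)
  · exact hY x hx s hs hxs (.r02 hxd hdc (by omega) (by omega) (by omega) hc hd)

theorem shape_of_lt_rank_three (hY : BlueFree Y) (hx : x ∈ Y) (hs : s ∈ Y) (hxs : x < s)
    (ha : s.a = x.a + 1) (hb : s.b = 0) (hc : s.c = 0) (hd : s.d = 0) :
    (x.d = 0 → x.c ≤ x.b) ∧ (x.d ≠ 0 → x.c < x.d ∧ x.b ≤ x.c) := by
  constructor
  · intro hxd
    by_contra! h
    exact hY x hx s hs hxs (.r13 hxd h ha hb hc hd)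
  · intro hxd
    by_contra h
    exact hY x hx s hs hxs (.r03 hxd (by omega) ha hb hc hd)

theorem c_eq_zero_and_d_eq_zero_of_lt_of_lt (hY : BlueFree Y) (hr : r ∈ Y) (hx : x ∈ Y)
    (hs : s ∈ Y) (hrx : r < x) (hxs : x < s) (hrb : r.b ≠ 0) (hrc : r.c = 0) (hrd : r.d = 0)
    (hbx : r.b ≤ x.b) (ha : s.a = x.a + 1) (hb : s.b = 0) (hc : s.c = 0) (hd : s.d = 0) :
    x.c = 0 ∧ x.d = 0 := by
  obtain ⟨h0, h1⟩ := hY.shape_of_lt_rank_three hx hs hxs ha hb hc hd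
  rcases eq_or_ne x.d 0 with hxd | hxd
  · refine ⟨?_, hxd⟩
    by_contra hxc
    exact hY r hr x hx hrx (.r21 hrd hrc hrb hxd hxc (h0 hxd))
  · obtain ⟨-, hbc⟩ := h1 hxd
    exact (hY r hr x hx hrx (.r20 hrd hrc hrb hxd hbc (hbx.trans hbc))).elim

theorem false_of_rank_two_rank_two (hY : BlueFree Y) (hp : p ∈ Y) (hq : q ∈ Y) (hpq : p < q)
    (hlp : IsLeftLimit Y p) (hlq : IsLeftLimit Y q) (hpb : p.b ≠ 0) (hqb : q.b ≠ 0) :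
    False := by
  obtain ⟨hpc, hpd⟩ := hY.c_eq_zero_and_d_eq_zero hp hlp
  obtain ⟨hqc, hqd⟩ := hY.c_eq_zero_and_d_eq_zero hq hlq
  have := lt_iff.mp hpq
  obtain ⟨x, hx, hxp, hxa, hxb, hxc, hxd⟩ := hY.exists_mem_lt_of_rank_two hp hlp hpb le_rfl
  by_cases hsame : q.a = p.a
  · exact hY x hx q hq (hxp.trans hpq)
      (.r02_far hxd (by omega) (by omega) (by omega) hqc hqd)
  obtain ⟨y, hy, -, hya, hyb, hyc, hyd⟩ :=
    hY.exists_mem_lt_of_rank_two hq hlq hqb (N := q.b + p.b) (by omega)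
  exact hY p hp y hy (lt_iff.mpr (by omega)) (.r20 hpd hpc hpb (by omega) (by omega) (by omega))

theorem false_of_rank_two_rank_three (hY : BlueFree Y) (hp : p ∈ Y) (hq : q ∈ Y)
    (hpq : p < q) (hlp : IsLeftLimit Y p) (hlq : IsLeftLimit Y q) (hpb : p.b ≠ 0)
    (hqb : q.b = 0) : False := by
  obtain ⟨hpc, hpd⟩ := hY.c_eq_zero_and_d_eq_zero hp hlp
  obtain ⟨hqc, hqd⟩ := hY.c_eq_zero_and_d_eq_zero hq hlq
  have := lt_iff.mp hpq
  obtain ⟨x, hx, hxp, hxa, hxb, hxc, hxd⟩ := hY.exists_mem_lt_of_rank_two hp hlp hpb le_rfl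
  by_cases hfar : p.a + 2 ≤ q.a
  · exact hY x hx q hq (hxp.trans hpq) (.r03_far hxd (by omega) (by omega) hqb hqc hqd)
  obtain ⟨y, hy, hty, hyq⟩ := hlq.2 ⟨p.a, p.b + 1, 0, 0⟩ (mk_lt_iff.mpr (by omega))
  have := mk_lt_iff.mp hty
  have := lt_iff.mp hyq
  have hpy : p < y := lt_iff.mpr (by omega)
  obtain ⟨hyc, hyd⟩ := hY.c_eq_zero_and_d_eq_zero_of_lt_of_lt hp hy hq hpy hyq hpb hpc hpd
    (by omega) (by omega) hqb hqc hqd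
  exact hY x hx y hy (hxp.trans hpy) (.r02_far hxd (by omega) (by omega) (by omega) hyc hyd)

theorem false_of_rank_three_rank_three (hY : BlueFree Y) (hp : p ∈ Y) (hq : q ∈ Y)
    (hpq : p < q) (hlp : IsLeftLimit Y p) (hlq : IsLeftLimit Y q) (hpb : p.b = 0)
    (hqb : q.b = 0) : False := by
  obtain ⟨hpc, hpd⟩ := hY.c_eq_zero_and_d_eq_zero hp hlp
  obtain ⟨hqc, hqd⟩ := hY.c_eq_zero_and_d_eq_zero hq hlq
  have hpa := a_ne_zero_of_isLeftLimit hlp hpb hpc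
  have := lt_iff.mp hpq
  obtain ⟨x, hx, htx, hxp⟩ := hlp.2 ⟨p.a - 1, 0, 0, 0⟩ (mk_lt_iff.mpr (by omega))
  have := mk_lt_iff.mp htx
  have := lt_iff.mp hxp
  obtain ⟨h0, h1⟩ := hY.shape_of_lt_rank_three hx hp hxp (by omega) hpb hpc hpd
  rcases eq_or_ne x.d 0 with hxd | hxd
  · rcases eq_or_ne x.c 0 with hxc | hxc
    · obtain ⟨y, hy, hty, hyq⟩ := hlq.2 ⟨q.a - 1, x.b, 0, 0⟩ (mk_lt_iff.mpr (by omega))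
      have := mk_lt_iff.mp hty
      have := lt_iff.mp hyq
      obtain ⟨hyc, hyd⟩ := hY.c_eq_zero_and_d_eq_zero_of_lt_of_lt hx hy hq
        (lt_iff.mpr (by omega)) hyq (by omega) hxc hxd (by omega) (by omega) hqb hqc hqd
      exact hY p hp y hy (lt_iff.mpr (by omega)) (.r32 hpd hpc hpb hpa hyd hyc (by omega))
    · exact hY x hx q hq (hxp.trans hpq) (.r13_far hxd hxc (h0 hxd) (by omega) hqb hqc hqd)
  · obtain ⟨hcd, hbc⟩ := h1 hxd
    exact hY x hx q hq (hxp.trans hpq) (.r03_far hcd hbc (by omega) hqb hqc hqd)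

theorem false_of_isLeftLimit (hY : BlueFree Y) (hp : p ∈ Y) (hq : q ∈ Y) (hpq : p < q)
    (hlp : IsLeftLimit Y p) (hlq : IsLeftLimit Y q) : False := by
  rcases eq_or_ne p.b 0 with hpb | hpb <;> rcases eq_or_ne q.b 0 with hqb | hqb
  · exact hY.false_of_rank_three_rank_three hp hq hpq hlp hlq hpb hqb
  · obtain ⟨hpc, hpd⟩ := hY.c_eq_zero_and_d_eq_zero hp hlp
    obtain ⟨hqc, hqd⟩ := hY.c_eq_zero_and_d_eq_zero hq hlq
    exact hY p hp q hq hpq (.r32 hpd hpc hpb (a_ne_zero_of_isLeftLimit hlp hpb hpc) hqd hqc hqb)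
  · exact hY.false_of_rank_two_rank_three hp hq hpq hlp hlq hpb hqb
  · exact hY.false_of_rank_two_rank_two hp hq hpq hlp hlq hpb hqb

end BlueFree

end Digits

/-- `ω^4 ↛_cl (ω·2 + 1, 3)²`: there is a 2-coloring of pairs below `ω^4` with no
red (color 0) closed copy of `ω·2 + 1` and no blue (color 1) triangle. -/
theorem stmt_9 :
    ∃ c : Ordinal → Ordinal → Fin 2,
      (¬ ∃ X ⊆ Set.Iio (Ordinal.omega0 ^ (4 : Ordinal)),
          IsClosedCopy X (Ordinal.omega0 * 2 + 1) ∧ Homog c X 0) ∧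
      (¬ ∃ x y z : Ordinal, x < y ∧ y < z ∧ z < Ordinal.omega0 ^ (4 : Ordinal) ∧
          c x y = 1 ∧ c x z = 1 ∧ c y z = 1) := by
  open Digits in
  refine ⟨coloring, ?_, ?_⟩
  · rintro ⟨X, hX4, hcopy, hred⟩
    obtain ⟨p, hp, q, hq, hpq, hlp, hlq⟩ := hcopy.exists_isLeftLimit_pair
    have hX : X ⊆ range val := fun x hx ↦ exists_val_eq (hX4 hx)
    obtain ⟨p, rfl⟩ := hX hp
    obtain ⟨q, rfl⟩ := hX hq
    have hY : BlueFree (val ⁻¹' X) := fun u hu v hv huv ↦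
      coloring_val_eq_zero.mp (hred _ hu _ hv (val_strictMono huv))
    exact hY.false_of_isLeftLimit hp hq (val_lt_val.mp hpq) (hlp.preimage val_strictMono hX)
      (hlq.preimage val_strictMono hX)
  · rintro ⟨x, y, z, hxy, hyz, hz, hxy', hxz', hyz'⟩
    obtain ⟨u, rfl⟩ := exists_val_eq ((hxy.trans hyz).trans hz)
    obtain ⟨v, rfl⟩ := exists_val_eq (hyz.trans hz)
    obtain ⟨w, rfl⟩ := exists_val_eq hz
    exact Blue.not_triangle (val_lt_val.mp hyz) (coloring_val_eq_one.mp hxy')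
      (coloring_val_eq_one.mp hyz') (coloring_val_eq_one.mp hxz')
end

section
/- For every integer k ≥ 3, A₃(k) ≥ 3^{k−2}/2^{k−1}, where A₃(k) is the least m such that every 3-coloring of ordered pairs of an m-set admits a k-subset S in which every vertex's incoming edges from S avoid at least one color. -/
open Ordinal Set

/-! A greedy Erdős–Rado argument on the 9-coloring `{x < y} ↦ (c x y, c y x)` yields a large
end-homogeneous set; pigeonholing the colors `c x y` of its elements towards later ones leaves a
`k`-set in which each vertex receives at most two colors, so `A₃(k)` is finite.

For the lower bound, a vertex `x` of a fixed `k`-set `S` misses some color among its `k - 1` incoming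
edges from `S` with probability at most `3 (2/3)^(k-1)`, independently over `x ∈ S`, since these
events involve disjoint columns of `c`. A union bound over the `(m choose k) ≤ m^k` sets `S` gives
`1 ≤ (m · 3 (2/3)^(k-1))^k` whenever `m` has the avoidance property. -/

open Finset Fintype

def IsAvoiding {α κ : Type*} (c : α → α → κ) (S : Finset α) : Prop :=
  ∀ x ∈ S, ∃ i, ∀ y ∈ S, y ≠ x → c y x ≠ i

section Greedy

variable {α β κ : Type*} [LinearOrder α]

theorem exists_endHomogeneous_subset [Fintype β] (f : α → α → β) (t : ℕ) (A : Finset α)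
    (hA : (card β + 1) ^ t ≤ #A) :
    ∃ S ⊆ A, #S = t ∧ ∃ g : α → β, ∀ x ∈ S, ∀ y ∈ S, x < y → f x y = g x := by
  classical
  induction t generalizing A with
  | zero => exact ⟨∅, empty_subset A, rfl, fun x => f x x, by simp⟩
  | succ t ih =>
    have hne : A.Nonempty := card_pos.1 (lt_of_lt_of_le (by positivity) hA)
    set x := A.min' hne
    have hfiber : card β * (card β + 1) ^ t ≤ #(A.erase x) := by
      rw [card_erase_of_mem (min'_mem A hne)]
      have := Nat.one_le_pow t (card β + 1) (by omega)
      rw [pow_succ', add_one_mul] at hA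
      omega
    obtain ⟨d, -, hd⟩ := exists_le_card_fiber_of_mul_le_card_of_maps_to
      (fun y _ => mem_univ (f x y)) ⟨f x x, mem_univ _⟩ (by simpa using hfiber)
    obtain ⟨S, hSB, hSt, g, hg⟩ := ih _ hd
    have hS : ∀ y ∈ S, x < y ∧ f x y = d := fun y hy => by
      obtain ⟨hyA, hyd⟩ := mem_filter.1 (hSB hy)
      exact ⟨min'_lt_of_mem_erase_min' A hne hyA, hyd⟩
    have hxS : x ∉ S := fun h => (hS x h).1.false
    refine ⟨insert x S, insert_subset (min'_mem A hne) fun y hy => ?_, by simp [hxS, hSt],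
      Function.update g x d, ?_⟩
    · exact mem_of_mem_erase (mem_filter.1 (hSB hy)).1
    intro u hu v hv huv
    rcases mem_insert.1 hu with rfl | hu <;> rcases mem_insert.1 hv with rfl | hv
    · exact absurd huv (lt_irrefl _)
    · simpa using (hS v hv).2
    · exact absurd ((hS u hu).1.trans huv) (lt_irrefl _)
    · rw [Function.update_of_ne (ne_of_mem_of_not_mem hu hxS)]
      exact hg u hu v hv huv

theorem exists_isAvoiding_of_pow_le_card [Fintype α] [Fintype κ] (hκ : 3 ≤ card κ)
    (c : α → α → κ) (k : ℕ) (hα : (card κ ^ 2 + 1) ^ (card κ * k) ≤ card α) :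
    ∃ S : Finset α, #S = k ∧ IsAvoiding c S := by
  classical
  obtain ⟨T, -, hTcard, g, hg⟩ := exists_endHomogeneous_subset (fun x y => (c x y, c y x))
    (card κ * k) univ (by simpa [sq] using hα)
  have : Nonempty κ := card_pos_iff.1 (by omega)
  obtain ⟨a, -, ha⟩ := exists_le_card_fiber_of_mul_le_card_of_maps_to
    (s := T) (n := k) (fun x _ => mem_univ (g x).1) univ_nonempty (by simp [hTcard])
  obtain ⟨S, hST, rfl⟩ := exists_subset_card_eq ha
  refine ⟨S, rfl, fun x hx => ?_⟩
  -- Edges into `x` come from earlier vertices, colored `a`, or from later ones, colored `(g x).2`.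
  obtain ⟨i, -, hi⟩ := exists_mem_notMem_of_card_lt_card
    (s := {a, (g x).2}) (t := univ) (by simpa using (card_le_two.trans_lt (by omega)))
  have hi' : i ≠ a ∧ i ≠ (g x).2 := by simpa using hi
  refine ⟨i, fun y hy hyx => ?_⟩
  obtain ⟨hxT, -⟩ := mem_filter.1 (hST hx)
  obtain ⟨hyT, hya⟩ := mem_filter.1 (hST hy)
  rcases hyx.lt_or_gt with hlt | hlt
  · have hyx : c y x = a := (congrArg Prod.fst (hg y hyT x hxT hlt)).trans hya
    exact hyx ▸ hi'.1.symm
  · have hyx : c y x = (g x).2 := congrArg Prod.snd (hg x hxT y hyT hlt)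
    exact hyx ▸ hi'.2.symm

end Greedy

section Counting

variable {ι κ : Type*} [Fintype ι] [DecidableEq ι] [Fintype κ] [DecidableEq κ]

theorem card_filter_forall_ne_mul_pow (s : Finset ι) (i : κ) :
    #{v : ι → κ | ∀ y ∈ s, v y ≠ i} * card κ ^ #s = (card κ - 1) ^ #s * card κ ^ card ι := by
  have hpi : ({v : ι → κ | ∀ y ∈ s, v y ≠ i} : Finset _) =
      piFinset fun y => if y ∈ s then univ.erase i else univ := by
    ext v
    simp only [mem_filter, Finset.mem_univ, true_and, mem_piFinset]
    refine forall_congr' fun y => ?_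
    split_ifs <;> simp [*]
  rw [hpi, card_piFinset]
  simp only [apply_ite, Finset.mem_univ, card_erase_of_mem, Finset.card_univ, prod_ite,
    Finset.subset_univ, filter_mem_eq_of_subset, prod_const]
  rw [filter_notMem_eq_sdiff, card_univ_sdiff, mul_assoc, ← pow_add,
    Nat.sub_add_cancel (card_le_univ s)]

theorem card_filter_exists_forall_ne_mul_pow_le (s : Finset ι) :
    #{v : ι → κ | ∃ i, ∀ y ∈ s, v y ≠ i} * card κ ^ #s ≤
      card κ * ((card κ - 1) ^ #s * card κ ^ card ι) := by
  have hunion : ({v : ι → κ | ∃ i, ∀ y ∈ s, v y ≠ i} : Finset _) ⊆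
      univ.biUnion fun i => {v | ∀ y ∈ s, v y ≠ i} := fun v hv => by
    simpa using hv
  calc #{v : ι → κ | ∃ i, ∀ y ∈ s, v y ≠ i} * card κ ^ #s
      ≤ (∑ i : κ, #{v : ι → κ | ∀ y ∈ s, v y ≠ i}) * card κ ^ #s := by
        gcongr
        exact (Finset.card_le_card hunion).trans card_biUnion_le
    _ = card κ * ((card κ - 1) ^ #s * card κ ^ card ι) := by
        simp [sum_mul, card_filter_forall_ne_mul_pow, Finset.card_univ]

theorem card_filter_forall_swap_mem {β : Type*} [Fintype β] [DecidableEq β]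
    (T : ι → Finset (β → κ)) :
    #{c : β → ι → κ | ∀ x, Function.swap c x ∈ T x} = ∏ x, #(T x) := by
  rw [← card_piFinset]
  refine card_nbij' Function.swap Function.swap (fun c hc => ?_) (fun c hc => ?_)
    (fun _ _ => rfl) (fun _ _ => rfl)
  · simpa [mem_piFinset] using hc
  · simpa [mem_piFinset] using hc

open Classical in
theorem card_isAvoiding_mul_pow_le (S : Finset ι) :
    #{c : ι → ι → κ | IsAvoiding c S} * (card κ ^ (#S - 1)) ^ #S ≤
      (card κ * (card κ - 1) ^ (#S - 1)) ^ #S * (card κ ^ card ι) ^ card ι := by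
  -- Column `x` of an avoiding coloring lies in `T x`, and the columns are independent.
  let T : ι → Finset (ι → κ) := fun x =>
    if x ∈ S then ({v | ∃ i, ∀ y ∈ S.erase x, v y ≠ i} : Finset _) else univ
  have hsub : ({c : ι → ι → κ | IsAvoiding c S} : Finset _) ⊆
      ({c | ∀ x, Function.swap c x ∈ T x} : Finset _) := fun c hc => by
    have hc : IsAvoiding c S := (mem_filter.1 hc).2
    refine mem_filter.2 ⟨Finset.mem_univ c, fun x => ?_⟩
    by_cases hx : x ∈ S
    · obtain ⟨i, hi⟩ := hc x hx
      simpa [T, hx] using ⟨i, fun y hyx hy => hi y hy hyx⟩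
    · simp [T, hx]
  have hcol : ∀ x, #(T x) * (if x ∈ S then card κ ^ (#S - 1) else 1) ≤
      (if x ∈ S then card κ * (card κ - 1) ^ (#S - 1) else 1) * card κ ^ card ι := fun x => by
    by_cases hx : x ∈ S
    · simpa [T, hx, card_erase_of_mem hx, mul_assoc] using
        card_filter_exists_forall_ne_mul_pow_le (κ := κ) (S.erase x)
    · simp [T, hx, Finset.card_univ]
  calc #{c : ι → ι → κ | IsAvoiding c S} * (card κ ^ (#S - 1)) ^ #S
      ≤ #{c : ι → ι → κ | ∀ x, Function.swap c x ∈ T x} *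
          ∏ x, (if x ∈ S then card κ ^ (#S - 1) else 1) := by
        rw [Fintype.prod_ite_mem, prod_const]
        exact Nat.mul_le_mul_right _ (Finset.card_le_card hsub)
    _ = ∏ x, #(T x) * (if x ∈ S then card κ ^ (#S - 1) else 1) := by
        rw [card_filter_forall_swap_mem, prod_mul_distrib]
    _ ≤ ∏ x, (if x ∈ S then card κ * (card κ - 1) ^ (#S - 1) else 1) * card κ ^ card ι :=
        prod_le_prod (fun _ _ => Nat.zero_le _) fun x _ => hcol x
    _ = (card κ * (card κ - 1) ^ (#S - 1)) ^ #S * (card κ ^ card ι) ^ card ι := by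
        rw [prod_mul_distrib, Fintype.prod_ite_mem, prod_const, prod_const, Finset.card_univ]

theorem pow_sub_two_le_card_mul_pow_of_forall_exists_isAvoiding [Nonempty κ] {k : ℕ}
    (hk : 2 ≤ k) (h : ∀ c : ι → ι → κ, ∃ S : Finset ι, #S = k ∧ IsAvoiding c S) :
    card κ ^ (k - 2) ≤ card ι * (card κ - 1) ^ (k - 1) := by
  classical
  set N := card ι
  set n := card κ
  have hn : 0 < n := card_pos
  have hunion : (n ^ N) ^ N ≤ ∑ S ∈ powersetCard k univ, #{c : ι → ι → κ | IsAvoiding c S} :=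
    calc (n ^ N) ^ N = #(univ : Finset (ι → ι → κ)) := by simp [n, N, Finset.card_univ]
      _ ≤ #((powersetCard k univ).biUnion fun S => ({c | IsAvoiding c S} : Finset _)) :=
          Finset.card_le_card fun c _ => by
            obtain ⟨S, hS, hc⟩ := h c
            exact mem_biUnion.2
              ⟨S, mem_powersetCard_univ.2 hS, mem_filter.2 ⟨Finset.mem_univ c, hc⟩⟩
      _ ≤ _ := card_biUnion_le
  have hcount : (n ^ N) ^ N * (n ^ (k - 1)) ^ k ≤
      (n ^ N) ^ N * (N ^ k * (n * (n - 1) ^ (k - 1)) ^ k) :=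
    calc (n ^ N) ^ N * (n ^ (k - 1)) ^ k
        ≤ ∑ S ∈ powersetCard k univ, #{c : ι → ι → κ | IsAvoiding c S} * (n ^ (k - 1)) ^ k := by
          rw [← sum_mul]
          gcongr
      _ ≤ ∑ S ∈ powersetCard k (univ : Finset ι), (n * (n - 1) ^ (k - 1)) ^ k * (n ^ N) ^ N :=
          sum_le_sum fun S hS => by
            obtain rfl := (mem_powersetCard.1 hS).2
            exact card_isAvoiding_mul_pow_le S
      _ = N.choose k * ((n * (n - 1) ^ (k - 1)) ^ k * (n ^ N) ^ N) := by
          rw [sum_const, card_powersetCard, Finset.card_univ, _root_.smul_eq_mul]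
      _ ≤ N ^ k * ((n * (n - 1) ^ (k - 1)) ^ k * (n ^ N) ^ N) :=
          Nat.mul_le_mul_right _ (Nat.choose_le_pow N k)
      _ = (n ^ N) ^ N * (N ^ k * (n * (n - 1) ^ (k - 1)) ^ k) := by ring
  have hroot : n ^ (k - 1) ≤ N * (n * (n - 1) ^ (k - 1)) := by
    rw [← Nat.pow_le_pow_iff_left (by omega : k ≠ 0), mul_pow]
    exact Nat.le_of_mul_le_mul_left hcount (by positivity)
  refine Nat.le_of_mul_le_mul_right ?_ hn
  calc n ^ (k - 2) * n = n ^ (k - 1) := by rw [← pow_succ]; congr 1; omega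
    _ ≤ N * (n * (n - 1) ^ (k - 1)) := hroot
    _ = N * (n - 1) ^ (k - 1) * n := by ring

end Counting

/-- For every `k ≥ 3`, `A₃(k) ≥ 3^{k−2} / 2^{k−1}`. -/
theorem stmt_15 (k : ℕ) (hk : 3 ≤ k) :
    (3 : ℝ) ^ (k - 2) / 2 ^ (k - 1) ≤ (A3 k : ℝ) := by
  have hfinite : AvoidProp ((3 ^ 2 + 1) ^ (3 * k)) k := fun c =>
    exists_isAvoiding_of_pow_le_card (by simp) c k (by simp)
  obtain ⟨-, hA⟩ : 1 ≤ A3 k ∧ AvoidProp (A3 k) k := Nat.sInf_mem (s := {m | 1 ≤ m ∧ AvoidProp m k})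
    ⟨_, Nat.one_le_pow _ _ (by norm_num), hfinite⟩
  have hbound := pow_sub_two_le_card_mul_pow_of_forall_exists_isAvoiding (by omega) hA
  simp only [Fintype.card_fin] at hbound
  rw [div_le_iff₀ (by positivity)]
  exact_mod_cast hbound
end
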